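/- arXiv:1811.03644 — 2 statements merged into one kernel-verified Lean document; each statement's English description precedes it below -/
import Mathlib

section
/- Let M be a module over a filtered ring D with a good exhaustive increasing filtration F_•M such that F_p M = 0 for p sufficiently negative (locally). Suppose that for each p ≤ m the p-th graded de Rham-type complex gr^F_p DR(M), whose terms in degrees −d,…,0 are gr^F_{p}M, Ω^1⊗gr^F_{p+1}M, …, Ω^d⊗gr^F_{p+d}M, is acyclic. Then F_{m+d} M = 0. -/
/-!
Only the rightmost term of the graded de Rham complexes matters. If `F_{q-1} M = 0` and
`p = q - d`, the degree `-1` term `Ω^{d-1} ⊗ gr^F_{q-1} M` of `gr^F_p DR(M)` vanishes, so exactness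
in degree `0` forces `Ω^d ⊗ gr^F_q M = 0`; as `Ω^d` is free and nonzero, hence faithfully flat,
`gr^F_q M = 0`, i.e. `F_q M = 0`. Starting from an index where the filtration vanishes, this
propagates upwards up to `q = m + d`.
-/

open CategoryTheory TensorProduct

lemma Monotone.eq_bot_of_pred_eq_bot {α : Type*} [PartialOrder α] [OrderBot α] {F : ℤ → α}
    (hmono : Monotone F) {p₀ n : ℤ} (hp₀ : F p₀ = ⊥)
    (hstep : ∀ q ≤ n, F (q - 1) = ⊥ → F q = ⊥) : F n = ⊥ := by
  rcases le_or_gt n p₀ with hn | hn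
  · exact eq_bot_mono (hmono hn) hp₀
  have hup : ∀ q, p₀ ≤ q → q ≤ n → F q = ⊥ := by
    intro q hq
    induction q, hq using Int.leInduction with
    | base => exact fun _ => hp₀
    | succ q _ ih => exact fun hqn => hstep _ hqn (by simpa using ih (by omega))
  exact hup n hn.le le_rfl

lemma Submodule.subsingleton_quotient_comap_subtype_iff {R M : Type*} [Ring R] [AddCommGroup M]
    [Module R M] {A B : Submodule R M} : Subsingleton (A ⧸ B.comap A.subtype) ↔ A ≤ B := by
  rw [Submodule.Quotient.subsingleton_iff, Submodule.comap_subtype_eq_top]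

lemma CochainComplex.isZero_X_of_exactAt {C : Type*} [Category C] [Preadditive C]
    (K : CochainComplex C ℤ) {i : ℤ} (hK : K.ExactAt i) (hprev : Limits.IsZero (K.X (i - 1)))
    (hnext : Limits.IsZero (K.X (i + 1))) : Limits.IsZero (K.X i) :=
  ((K.exactAt_iff' (i - 1) i (i + 1) (by simp) (by simp)).mp hK).isZero_X₂
    (hprev.eq_of_src _ _) (hnext.eq_of_tgt _ _)

theorem stmt5_general (R : Type) [CommRing R]
    (M : Type) [AddCommGroup M] [Module R M]
    (F : ℤ → Submodule R M)
    (hmono : Monotone F)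
    (hbelow : ∃ p₀ : ℤ, F p₀ = ⊥)
    (d : ℕ)
    (Ω : ℕ → Type) [∀ k, AddCommGroup (Ω k)] [∀ k, Module R (Ω k)]
    [∀ k, Module.Free R (Ω k)]
    (hΩd : Nontrivial (Ω d))
    -- `C p` is the complex `gr^F_p DR(M)`, concentrated in degrees `-d, …, 0`:
    (C : ℤ → CochainComplex (ModuleCat R) ℤ)
    (hterm : ∀ p i : ℤ, -(d : ℤ) ≤ i → i ≤ 0 →
      Nonempty (((C p).X i) ≅ ModuleCat.of R
        (Ω (i + d).toNat ⊗[R]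
          (↥(F (p + i + d)) ⧸ Submodule.comap (F (p + i + d)).subtype (F (p + i + d - 1))))))
    (hzero : ∀ p i : ℤ, (i < -(d : ℤ) ∨ 0 < i) → Limits.IsZero ((C p).X i))
    (m : ℤ)
    -- acyclicity of `gr^F_p DR(M)` for all `p ≤ m`:
    (hacy : ∀ p : ℤ, p ≤ m → ∀ i : ℤ, (C p).ExactAt i) :
    F (m + d) = ⊥ := by
  obtain ⟨p₀, hp₀⟩ := hbelow
  refine hmono.eq_bot_of_pred_eq_bot hp₀ fun q hq hprev => ?_
  have hXprev : Limits.IsZero ((C (q - d)).X (0 - 1)) := by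
    rcases Nat.eq_zero_or_pos d with hd | hd
    · exact hzero _ _ (by omega)
    obtain ⟨e⟩ := hterm (q - d) (0 - 1) (by omega) (by omega)
    rw [show q - d + (0 - 1) + d = q - 1 by ring] at e
    have : Subsingleton (F (q - 1) ⧸ (F (q - 1 - 1)).comap (F (q - 1)).subtype) :=
      Submodule.subsingleton_quotient_comap_subtype_iff.mpr (hprev ▸ bot_le)
    exact (ModuleCat.isZero_of_subsingleton _).of_iso e
  have hX₀ := (C (q - d)).isZero_X_of_exactAt (hacy _ (by omega) 0) hXprev (hzero _ _ (by omega))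
  obtain ⟨e⟩ := hterm (q - d) 0 (by omega) le_rfl
  rw [show ((0 : ℤ) + d).toNat = d by simp, show q - d + 0 + d = q by ring] at e
  have hgr := ModuleCat.subsingleton_of_isZero (hX₀.of_iso e.symm)
  rw [Module.FaithfullyFlat.subsingleton_tensorProduct_iff_right,
    Submodule.subsingleton_quotient_comap_subtype_iff] at hgr
  exact le_bot_iff.mp (hgr.trans hprev.le)

theorem stmt5 (R : Type) [CommRing R]
    (M : Type) [AddCommGroup M] [Module R M]
    (F : ℤ → Submodule R M)
    (hmono : Monotone F)
    (hexh : ⨆ p : ℤ, F p = ⊤)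
    (hbelow : ∃ p₀ : ℤ, F p₀ = ⊥)
    (d : ℕ)
    (Ω : ℕ → Type) [∀ k, AddCommGroup (Ω k)] [∀ k, Module R (Ω k)]
    [∀ k, Module.Free R (Ω k)] [∀ k, Module.Finite R (Ω k)]
    (hΩd : Nontrivial (Ω d))
    -- `C p` is the complex `gr^F_p DR(M)`, concentrated in degrees `-d, …, 0`:
    (C : ℤ → CochainComplex (ModuleCat R) ℤ)
    (hterm : ∀ p i : ℤ, -(d : ℤ) ≤ i → i ≤ 0 →
      Nonempty (((C p).X i) ≅ ModuleCat.of R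
        (Ω (i + d).toNat ⊗[R]
          (↥(F (p + i + d)) ⧸ Submodule.comap (F (p + i + d)).subtype (F (p + i + d - 1))))))
    (hzero : ∀ p i : ℤ, (i < -(d : ℤ) ∨ 0 < i) → Limits.IsZero ((C p).X i))
    (m : ℤ)
    -- acyclicity of `gr^F_p DR(M)` for all `p ≤ m`:
    (hacy : ∀ p : ℤ, p ≤ m → ∀ i : ℤ, (C p).ExactAt i) :
    F (m + d) = ⊥ :=
  stmt5_general R M F hmono hbelow d Ω hΩd C hterm hzero m hacy
end

section
/- Let (M, F_•M) be a coherent filtered D-module on a complex manifold Y whose filtration is good and exhaustive. If the graded complex gr^F_p DR(M) is acyclic for all p ≥ p_0 + 1, then the inclusion of the subcomplex F_{p_0} DR(M) into DR(M) is a quasi-isomorphism. -/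
/-!
For `p > p₀` the long exact homology sequence of `0 → F_{p-1} → F_p → gr_p → 0` makes
`F_{p-1} → F_p` a quasi-isomorphism, so `H^n(F_{p₀}) → H^n(DR)` is an isomorphism as soon as
`H^n(F_q) → H^n(DR)` is for some `q ≥ p₀`. Since the `F_q` are subcomplexes exhausting `DR`
degreewise, for `q` large `F_q → DR` is an isomorphism in degrees `n - 1`, `n`, `n + 1`, hence on
`H^n`.
-/

open CategoryTheory

lemma Int.le_induction_of_sub_one {P : ℤ → Prop} {m : ℤ} (step : ∀ n, m < n → P (n - 1) → P n)
    {n : ℤ} (hmn : m ≤ n) (hm : P m) : P n := by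
  induction n, hmn using Int.leInduction with
  | base => exact hm
  | succ n _ ih => exact step (n + 1) (by omega) (by rwa [add_sub_cancel_right])

namespace CategoryTheory.ShortComplex.ShortExact

variable {C ι : Type*} [Category C] [Abelian C] {c : ComplexShape ι}
  {S : ShortComplex (HomologicalComplex C c)}

lemma quasiIso_f (hS : S.ShortExact) (h₃ : S.X₃.Acyclic) : _root_.QuasiIso S.f := by
  rw [_root_.quasiIso_iff]
  intro n
  rw [quasiIsoAt_iff_isIso_homologyMap]
  have hzero : ∀ i, Limits.IsZero (S.X₃.homology i) := fun i =>
    (HomologicalComplex.exactAt_iff_isZero_homology _ _).1 (h₃ i)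
  have : Mono (HomologicalComplex.homologyMap S.f n) := by
    by_cases hn : ∃ i, c.Rel i n
    · obtain ⟨i, hin⟩ := hn
      exact (hS.homology_exact₁ i n hin).mono_g ((hzero i).eq_of_src _ _)
    · have := hS.mono_f
      exact HomologicalComplex.mono_homologyMap_of_mono_of_not_rel S.f n (by simpa using hn)
  have : Epi (HomologicalComplex.homologyMap S.f n) :=
    (hS.homology_exact₂ n).epi_f ((hzero n).eq_of_tgt _ _)
  exact isIso_of_mono_of_epi _

end CategoryTheory.ShortComplex.ShortExact

namespace HomologicalComplex

variable {C ι : Type*} [Category C] {c : ComplexShape ι}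

lemma quasiIsoAt_of_isIso_f [Limits.HasZeroMorphisms C] {K L : HomologicalComplex C c}
    (f : K ⟶ L) (n : ι) [K.HasHomology n] [L.HasHomology n]
    (h₁ : IsIso (f.f (c.prev n))) (h₂ : IsIso (f.f n)) (h₃ : IsIso (f.f (c.next n))) :
    QuasiIsoAt f n := by
  rw [quasiIsoAt_iff]
  have : IsIso ((shortComplexFunctor C c n).map f).τ₁ := h₁
  have : IsIso ((shortComplexFunctor C c n).map f).τ₂ := h₂
  have : IsIso ((shortComplexFunctor C c n).map f).τ₃ := h₃
  have : IsIso ((shortComplexFunctor C c n).map f) := ShortComplex.isIso_of_isIso _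
  infer_instance

lemma quasiIso_of_degreewise_shortExact [Abelian C] {K L M : HomologicalComplex C c}
    (f : K ⟶ L) (g : L ⟶ M) (w : ∀ i, f.f i ≫ g.f i = 0)
    (hS : ∀ i, (ShortComplex.mk (f.f i) (g.f i) (w i)).ShortExact) (hM : M.Acyclic) :
    QuasiIso f :=
  (shortExact_of_degreewise_shortExact (ShortComplex.mk f g (by ext i; exact w i)) hS).quasiIso_f
    hM

end HomologicalComplex

namespace CochainComplex

variable {C : Type*} [Category C] [Abelian C] {F : ℤ → CochainComplex C ℤ}
  {D : CochainComplex C ℤ} {ι : ∀ p, F p ⟶ D} {incl : ∀ p, F (p - 1) ⟶ F p}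

lemma filtration_isIso_f_of_le (hcomm : ∀ p, incl p ≫ ι p = ι (p - 1))
    (hmono : ∀ p i, Mono ((ι p).f i)) (i : ℤ) {p q : ℤ} (hpq : p ≤ q)
    (h : IsIso ((ι p).f i)) : IsIso ((ι q).f i) :=
  Int.le_induction_of_sub_one (P := fun r => IsIso ((ι r).f i)) (fun r _ hr => by
    rw [← hcomm r, HomologicalComplex.comp_f] at hr
    have := hmono r i
    have := epi_of_epi ((incl r).f i) ((ι r).f i)
    exact isIso_of_mono_of_epi _) hpq h

lemma filtration_quasiIsoAt_of_le (hcomm : ∀ p, incl p ≫ ι p = ι (p - 1)) {p₀ : ℤ}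
    (hincl : ∀ p, p₀ < p → QuasiIso (incl p)) (n : ℤ) {q : ℤ} (hq : p₀ ≤ q)
    (h : QuasiIsoAt (ι q) n) : QuasiIsoAt (ι p₀) n :=
  Int.le_induction_of_sub_one (P := fun r => QuasiIsoAt (ι r) n → QuasiIsoAt (ι p₀) n)
    (fun r hr ih hqi => ih (by
      have := hincl r hr
      rw [← hcomm r]
      exact quasiIsoAt_comp _ _ n)) hq id h

end CochainComplex

theorem stmt6 {C : Type*} [Category C] [Abelian C]
    (Ffil : ℤ → CochainComplex C ℤ) (DR : CochainComplex C ℤ)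
    (gr : ℤ → CochainComplex C ℤ)
    (ι : ∀ p : ℤ, Ffil p ⟶ DR)
    (incl : ∀ p : ℤ, Ffil (p - 1) ⟶ Ffil p)
    (π : ∀ p : ℤ, Ffil p ⟶ gr p)
    -- the filtration is by subcomplexes of `DR(M)`, compatibly:
    (hmono : ∀ (p i : ℤ), Mono ((ι p).f i))
    (hcomm : ∀ p : ℤ, incl p ≫ ι p = ι (p - 1))
    -- `0 → F_{p-1} DR(M) → F_p DR(M) → gr^F_p DR(M) → 0` is exact in each degree:
    (hw : ∀ (p i : ℤ), (incl p).f i ≫ (π p).f i = 0)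
    (hses : ∀ (p i : ℤ), (ShortComplex.mk ((incl p).f i) ((π p).f i) (hw p i)).ShortExact)
    -- the filtration is exhaustive (and, being good, stabilizes degreewise):
    (hexh : ∀ i : ℤ, ∃ p : ℤ, IsIso ((ι p).f i))
    (p₀ : ℤ)
    -- `gr^F_p DR(M)` is acyclic for all `p ≥ p₀ + 1`:
    (hacy : ∀ p : ℤ, p₀ + 1 ≤ p → ∀ i : ℤ, (gr p).ExactAt i) :
    QuasiIso (ι p₀) := by
  have hincl : ∀ p, p₀ < p → QuasiIso (incl p) := fun p hp =>
    HomologicalComplex.quasiIso_of_degreewise_shortExact _ _ (hw p) (hses p) (hacy p hp)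
  rw [quasiIso_iff]
  intro n
  obtain ⟨a, ha⟩ := hexh (n - 1)
  obtain ⟨b, hb⟩ := hexh n
  obtain ⟨c, hc⟩ := hexh (n + 1)
  have hq : p₀ ≤ max p₀ (max a (max b c)) := le_max_left _ _
  refine CochainComplex.filtration_quasiIsoAt_of_le hcomm hincl n hq
    (HomologicalComplex.quasiIsoAt_of_isIso_f _ n ?_ ?_ ?_)
  · rw [CochainComplex.prev]
    exact CochainComplex.filtration_isIso_f_of_le hcomm hmono _ (by omega) ha
  · exact CochainComplex.filtration_isIso_f_of_le hcomm hmono _ (by omega) hb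
  · rw [CochainComplex.next]
    exact CochainComplex.filtration_isIso_f_of_le hcomm hmono _ (by omega) hc
end
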